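/- arXiv:1210.1051 — 5 statements merged into one kernel-verified Lean document; each statement's English description precedes it below -/
import Mathlib

section
/- Let H be a group and K a subgroup of H. A group homomorphism χ: K → ℂˣ extends to a group homomorphism H → ℂˣ if and only if the restriction of χ to K ∩ [H,H] is trivial, where [H,H] denotes the commutator subgroup of H. -/
/-!
A character of `H` kills `[H, H]`, which gives one direction. Conversely, the kernel of
`K → H^ab` is `K ∩ [H, H]`, so `χ` factors through the image of `K` in the abelianization
`H^ab`; since `ℂˣ` is a divisible abelian group, hence an injective `ℤ`-module by Baer's
criterion, the character of that image extends to `H^ab`, and composing with `H → H^ab`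
gives the extension.
-/

theorem IsAlgClosed.surjective_units_pow {K : Type*} [Field K] [IsAlgClosed K] {n : ℕ}
    (hn : n ≠ 0) : Function.Surjective fun a : Kˣ ↦ a ^ n := fun a ↦ by
  obtain ⟨z, hz⟩ := IsAlgClosed.exists_pow_nat_eq (a : K) (Nat.pos_of_ne_zero hn)
  have hz0 : z ≠ 0 := by rintro rfl; exact a.ne_zero (by rw [← hz, zero_pow hn])
  exact ⟨Units.mk0 z hz0, Units.ext hz⟩

noncomputable instance IsAlgClosed.unitsRootableByNat {K : Type*} [Field K] [IsAlgClosed K] :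
    RootableBy Kˣ ℕ :=
  rootableByOfPowLeftSurj _ _ IsAlgClosed.surjective_units_pow

noncomputable instance IsAlgClosed.unitsRootableByInt {K : Type*} [Field K] [IsAlgClosed K] :
    RootableBy Kˣ ℤ :=
  Group.rootableByIntOfRootableByNat _

theorem MonoidHom.exists_comp_eq_of_injective {A G₁ G₂ : Type*} [CommGroup A] [RootableBy A ℤ]
    [CommGroup G₁] [CommGroup G₂] {ι : G₁ →* G₂} (hι : Function.Injective ι) (φ : G₁ →* A) :
    ∃ ψ : G₂ →* A, ψ.comp ι = φ := by
  let _ : DivisibleBy (Additive A) ℤ :=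
    divisibleByOfSMulRightSurj _ _ fun hn ↦ RootableBy.surjective_pow A ℤ hn
  obtain ⟨ψ, hψ⟩ := (Module.Baer.of_divisible (Additive A)).extension_property_addMonoidHom
    ι.toAdditive hι φ.toAdditive
  exact ⟨MonoidHom.toAdditive.symm ψ, MonoidHom.toAdditive.injective hψ⟩

theorem MonoidHom.exists_comp_eq_of_ker_le {A G₁ G₂ : Type*} [CommGroup A] [RootableBy A ℤ]
    [Group G₁] [CommGroup G₂] (f : G₁ →* G₂) {φ : G₁ →* A} (h : f.ker ≤ φ.ker) :
    ∃ ψ : G₂ →* A, ψ.comp f = φ := by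
  let φ' : f.range →* A :=
    f.rangeRestrict.liftOfSurjective f.rangeRestrict_surjective ⟨φ, by rwa [ker_rangeRestrict]⟩
  obtain ⟨ψ, hψ⟩ := exists_comp_eq_of_injective f.range.subtype_injective φ'
  refine ⟨ψ, MonoidHom.ext fun x ↦ ?_⟩
  calc ψ (f x) = φ' (f.rangeRestrict x) := DFunLike.congr_fun hψ (f.rangeRestrict x)
    _ = φ x := f.rangeRestrict.liftOfRightInverse_comp_apply _ _ _ x

theorem Subgroup.exists_extension_iff {H A : Type*} [Group H] [CommGroup A] [RootableBy A ℤ]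
    (K : Subgroup H) (χ : K →* A) :
    (∃ χ' : H →* A, ∀ k : K, χ' (k : H) = χ k) ↔
      ∀ k : K, (k : H) ∈ _root_.commutator H → χ k = 1 := by
  constructor
  · rintro ⟨χ', hχ'⟩ k hk
    rw [← hχ' k]
    exact Abelianization.commutator_subset_ker χ' hk
  · intro hχ
    have hker : (Abelianization.of.comp K.subtype).ker ≤ χ.ker := fun k hk ↦
      hχ k (Abelianization.ker_of H ▸ hk)
    obtain ⟨ψ, hψ⟩ := MonoidHom.exists_comp_eq_of_ker_le _ hker
    exact ⟨ψ.comp Abelianization.of, DFunLike.congr_fun hψ⟩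

/-- A character of a subgroup `K` of a group `H` extends to `H` if and only if it is
trivial on `K ∩ [H,H]`. -/
theorem stmt_0 {H : Type*} [Group H] (K : Subgroup H) (χ : K →* ℂˣ) :
    (∃ χ' : H →* ℂˣ, ∀ k : K, χ' (k : H) = χ k) ↔
      ∀ k : K, (k : H) ∈ commutator H → χ k = 1 :=
  K.exists_extension_iff χ
end

section
/- Let 𝒪 be a Henselian local ring (for example, the ring of integers of a nonarchimedean local field, or any complete discrete valuation ring) whose residue field is finite with more than 2 elements. Then for every f ∈ 𝒪ˣ, the diagonal matrix diag(f, f⁻¹) lies in the commutator subgroup of SL₂(𝒪). -/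
/-!
If some unit `u` has `u² - 1` a unit, conjugation by `diag(u, u⁻¹)` exhibits every elementary
matrix as a commutator, and `diag(f, f⁻¹)` is a product of six elementary matrices. A residue
field with more than three elements provides such a `u`. Otherwise the residue field is `𝔽₃`,
so `2` is a unit and Hensel's lemma makes `-2` and one of `f`, `-f` squares in `𝒪`. Then
`diag(g², g⁻²) = [diag(g, g⁻¹), w]` for the Weyl element `w`, and `-1 = [w, s]` for
`s = [[a, 1], [1, -a]]` with `a² = -2`.
-/

/-- The diagonal matrix `[[f,0],[0,f⁻¹]]` as an element of `SL₂(R)`, for a unit `f`. -/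
def diagSL {R : Type*} [CommRing R] (f : Rˣ) : Matrix.SpecialLinearGroup (Fin 2) R :=
  ⟨!![(f : R), 0; 0, ((f⁻¹ : Rˣ) : R)], by simp [Matrix.det_fin_two_of]⟩

open IsLocalRing
open Matrix.SpecialLinearGroup (transvection transvection_coe)
open scoped MatrixGroups commutatorElement

lemma mem_commutator_of_mul_eq {G : Type*} [Group G] {a b c : G} (h : a * b = c * (b * a)) :
    c ∈ commutator G := by
  have hc : ⁅a, b⁆ = c := by rw [commutatorElement_def, h]; group
  exact hc ▸ Subgroup.commutator_mem_commutator (Subgroup.mem_top a) (Subgroup.mem_top b)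

section CommRing

variable {R : Type*} [CommRing R]

lemma coe_diagSL (f : Rˣ) :
    (diagSL f : Matrix (Fin 2) (Fin 2) R) = !![(f : R), 0; 0, ((f⁻¹ : Rˣ) : R)] :=
  rfl

lemma diagSL_mul (f g : Rˣ) : diagSL (f * g) = diagSL f * diagSL g := by
  apply Subtype.ext
  simp [coe_diagSL, mul_comm]

lemma coe_transvection_zero_one (b : R) :
    (transvection zero_ne_one b : SL(2, R)) = !![1, b; 0, 1] := by
  ext i j
  fin_cases i <;> fin_cases j <;> simp [transvection_coe]

lemma coe_transvection_one_zero (b : R) :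
    (transvection one_ne_zero b : SL(2, R)) = !![1, 0; b, 1] := by
  ext i j
  fin_cases i <;> fin_cases j <;> simp [transvection_coe]

variable (R) in
def weylSL : SL(2, R) :=
  ⟨!![0, 1; -1, 0], by simp [Matrix.det_fin_two_of]⟩

lemma coe_weylSL : (weylSL R : Matrix (Fin 2) (Fin 2) R) = !![0, 1; -1, 0] :=
  rfl

lemma diagSL_mul_transvection_zero_one (u : Rˣ) (b : R) :
    diagSL u * transvection zero_ne_one b =
      transvection zero_ne_one (((u : R) ^ 2 - 1) * b) *
        (transvection zero_ne_one b * diagSL u) := by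
  apply Subtype.ext
  simp [coe_diagSL, coe_transvection_zero_one]
  linear_combination (-(u : R) * b) * u.mul_inv

lemma diagSL_inv_mul_transvection_one_zero (u : Rˣ) (b : R) :
    diagSL u⁻¹ * transvection one_ne_zero b =
      transvection one_ne_zero (((u : R) ^ 2 - 1) * b) *
        (transvection one_ne_zero b * diagSL u⁻¹) := by
  apply Subtype.ext
  simp [coe_diagSL, coe_transvection_one_zero]
  linear_combination (-(u : R) * b) * u.mul_inv

lemma transvection_mem_commutator_of_isUnit_sq_sub_one {u : Rˣ} (hu : IsUnit ((u : R) ^ 2 - 1))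
    {i j : Fin 2} (hij : i ≠ j) (b : R) : transvection hij b ∈ commutator SL(2, R) := by
  obtain ⟨v, hv⟩ := hu
  have hb : b = ((u : R) ^ 2 - 1) * (((v⁻¹ : Rˣ) : R) * b) := by
    rw [← hv, ← mul_assoc, v.mul_inv, one_mul]
  fin_cases i <;> fin_cases j
  · exact absurd rfl hij
  · rw [hb]
    exact mem_commutator_of_mul_eq (diagSL_mul_transvection_zero_one u _)
  · rw [hb]
    exact mem_commutator_of_mul_eq (diagSL_inv_mul_transvection_one_zero u _)
  · exact absurd rfl hij

-- `diag(f, f⁻¹) = w(f) w(-1)` with `w(t) = E₁₂(t) E₂₁(-t⁻¹) E₁₂(t) = [[0, t], [-t⁻¹, 0]]`.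
lemma diagSL_eq_transvection_prod (f : Rˣ) :
    diagSL f = transvection zero_ne_one (f : R) * transvection one_ne_zero (-((f⁻¹ : Rˣ) : R)) *
      transvection zero_ne_one (f : R) * (transvection zero_ne_one (-1) *
        transvection one_ne_zero 1 * transvection zero_ne_one (-1)) := by
  apply Subtype.ext
  simp [coe_diagSL, coe_transvection_zero_one, coe_transvection_one_zero]

lemma diagSL_mem_commutator_of_isUnit_sq_sub_one {u : Rˣ} (hu : IsUnit ((u : R) ^ 2 - 1))
    (f : Rˣ) : diagSL f ∈ commutator SL(2, R) := by
  rw [diagSL_eq_transvection_prod]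
  refine mul_mem (mul_mem (mul_mem ?_ ?_) ?_) (mul_mem (mul_mem ?_ ?_) ?_) <;>
    exact transvection_mem_commutator_of_isUnit_sq_sub_one hu _ _

lemma diagSL_mul_self_mem_commutator (g : Rˣ) : diagSL (g * g) ∈ commutator SL(2, R) := by
  refine mem_commutator_of_mul_eq (a := diagSL g) (b := weylSL R) (Subtype.ext ?_)
  simp [coe_diagSL, coe_weylSL]

lemma diagSL_mem_commutator_of_isSquare {f : Rˣ} (hf : IsSquare (f : R)) :
    diagSL f ∈ commutator SL(2, R) := by
  obtain ⟨a, ha⟩ := hf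
  obtain ⟨g, rfl⟩ : IsUnit a := isUnit_of_mul_isUnit_left (ha ▸ f.isUnit)
  obtain rfl : f = g * g := Units.ext ha
  exact diagSL_mul_self_mem_commutator g

lemma diagSL_neg_one_mem_commutator {a : R} (ha : a * a = -2) :
    diagSL (-1) ∈ commutator SL(2, R) := by
  obtain ⟨s, hs⟩ : ∃ s : SL(2, R), (s : Matrix (Fin 2) (Fin 2) R) = !![a, 1; 1, -a] :=
    ⟨⟨_, by simp [Matrix.det_fin_two_of]; linear_combination -ha⟩, rfl⟩
  refine mem_commutator_of_mul_eq (a := weylSL R) (b := s) (Subtype.ext ?_)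
  simp [coe_diagSL, coe_weylSL, hs]

end CommRing

lemma HenselianLocalRing.isSquare_of_residue_eq_one {R : Type*} [CommRing R]
    [HenselianLocalRing R] (h2 : IsUnit (2 : R)) {c : R} (hc : residue R c = 1) :
    IsSquare c := by
  obtain ⟨a, ha, -⟩ := HenselianLocalRing.is_henselian (Polynomial.X ^ 2 - Polynomial.C c)
    (Polynomial.monic_X_pow_sub_C c two_ne_zero) 1
    (by rw [← residue_eq_zero_iff]; simp [hc]) (by simpa [one_add_one_eq_two] using h2)
  exact ⟨a, by simpa [sub_eq_zero, sq, eq_comm] using ha⟩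

lemma FiniteField.eq_one_or_eq_neg_one_of_card_eq_three {K : Type*} [Field K] [Fintype K]
    (hK : Fintype.card K = 3) {x : K} (hx : x ≠ 0) : x = 1 ∨ x = -1 := by
  simpa [hK] using FiniteField.pow_card_sub_one_eq_one x hx

lemma IsLocalRing.exists_isUnit_sq_sub_one {R : Type*} [CommRing R] [IsLocalRing R]
    [Fintype (ResidueField R)] (h : 3 < Fintype.card (ResidueField R)) :
    ∃ u : Rˣ, IsUnit ((u : R) ^ 2 - 1) := by
  classical
  obtain ⟨x, -, hx⟩ := Finset.exists_mem_notMem_of_card_lt_card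
    (s := {0, 1, -1}) (t := Finset.univ) (Finset.card_le_three.trans_lt h)
  simp only [Finset.mem_insert, Finset.mem_singleton, not_or] at hx
  obtain ⟨hx0, hx1, hx2⟩ := hx
  obtain ⟨y, rfl⟩ := residue_surjective x
  have hy : IsUnit y := (residue_ne_zero_iff_isUnit y).1 hx0
  refine ⟨hy.unit, (residue_ne_zero_iff_isUnit _).1 ?_⟩
  simpa [sub_eq_zero] using sq_ne_one_iff.2 ⟨hx1, hx2⟩

lemma diagSL_mem_commutator_of_card_residueField_eq_three {R : Type*} [CommRing R]
    [HenselianLocalRing R] [Fintype (ResidueField R)] (h3 : Fintype.card (ResidueField R) = 3)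
    (f : Rˣ) : diagSL f ∈ commutator SL(2, R) := by
  have hk2 : residue R 2 = -1 := by
    have hk3 : (3 : ResidueField R) = 0 := by
      simpa [h3] using FiniteField.cast_card_eq_zero (ResidueField R)
    rw [map_ofNat]
    linear_combination hk3
  have h2 : IsUnit (2 : R) := (residue_ne_zero_iff_isUnit _).1 (by simp [hk2])
  obtain ⟨a, ha⟩ : IsSquare (-2 : R) :=
    HenselianLocalRing.isSquare_of_residue_eq_one h2 (by simp [hk2])
  rcases FiniteField.eq_one_or_eq_neg_one_of_card_eq_three h3
    ((residue_ne_zero_iff_isUnit _).2 f.isUnit) with hf | hf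
  · exact diagSL_mem_commutator_of_isSquare (HenselianLocalRing.isSquare_of_residue_eq_one h2 hf)
  · have hf' : IsSquare ((-f : Rˣ) : R) :=
      HenselianLocalRing.isSquare_of_residue_eq_one h2 (by simp [hf])
    rw [← neg_neg f, ← neg_one_mul, diagSL_mul]
    exact mul_mem (diagSL_neg_one_mem_commutator ha.symm) (diagSL_mem_commutator_of_isSquare hf')

/-- Let `𝒪` be a Henselian local ring whose residue field is finite with more than two
elements.  Then for every unit `f`, the diagonal matrix `diag(f, f⁻¹)` lies in the
commutator subgroup of `SL₂(𝒪)`. -/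
theorem stmt_8 {O : Type*} [CommRing O] [HenselianLocalRing O]
    [Fintype (IsLocalRing.ResidueField O)]
    (hq : 2 < Fintype.card (IsLocalRing.ResidueField O)) (f : Oˣ) :
    diagSL f ∈ commutator (Matrix.SpecialLinearGroup (Fin 2) O) := by
  obtain h3 | h3 : Fintype.card (ResidueField O) = 3 ∨ 3 < Fintype.card (ResidueField O) := by
    omega
  · exact diagSL_mem_commutator_of_card_residueField_eq_three h3 f
  · obtain ⟨u, hu⟩ := exists_isUnit_sq_sub_one h3
    exact diagSL_mem_commutator_of_isUnit_sq_sub_one hu f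
end

section
/- Let P be a root pairing over ℤ between free ℤ-modules M (weights) and N (coweights), with Weyl group W acting on N by the coreflections s_α(λ) = λ − ⟨α, λ⟩·α∨. Then the subgroup of N generated by {λ − w·λ : λ ∈ N, w ∈ W} equals the subgroup of N generated by {⟨α, λ⟩·α∨ : α a root, λ ∈ N}. -/
/-!
Since `x - (g * h) • x = (x - h • x) + (h • x - g • (h • x))` and
`x - g⁻¹ • x = -(g⁻¹ • x - g • (g⁻¹ • x))`, the displacements `x - w • x` of all elements `w` of a
group lie in the subgroup generated by the displacements of its generators. For the Weyl group
these generators are the coreflections, whose displacements are `λ - s_α λ = ⟨α, λ⟩ • α∨`.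
-/

theorem Subgroup.sub_smul_mem_of_mem_closure {G N : Type*} [Group G] [AddGroup N]
    [DistribMulAction G N] {S : Set G} {H : AddSubgroup N} (hS : ∀ s ∈ S, ∀ x : N, x - s • x ∈ H)
    {g : G} (hg : g ∈ Subgroup.closure S) (x : N) : x - g • x ∈ H := by
  induction hg using Subgroup.closure_induction generalizing x with
  | mem s hs => exact hS s hs x
  | one => simp
  | mul g h _ _ hg hh =>
    have hsplit : x - (g * h) • x = (x - h • x) + (h • x - g • h • x) := by
      rw [mul_smul, sub_add_sub_cancel]
    exact hsplit ▸ H.add_mem (hh x) (hg (h • x))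
  | inv g _ hg =>
    have hflip : x - g⁻¹ • x = -(g⁻¹ • x - g • g⁻¹ • x) := by
      rw [smul_inv_smul, neg_sub]
    exact hflip ▸ H.neg_mem (hg (g⁻¹ • x))

theorem RootPairing.sub_coreflection_apply {ι R M N : Type*} [CommRing R] [AddCommGroup M]
    [Module R M] [AddCommGroup N] [Module R N] (P : RootPairing ι R M N) (i : ι) (f : N) :
    f - P.coreflection i f = P.toLinearMap (P.root i) f • P.coroot i :=
  sub_sub_cancel f _

theorem stmt_12_general {ι M N : Type*} [AddCommGroup M] [Module ℤ M] [AddCommGroup N] [Module ℤ N]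
    (P : RootPairing ι ℤ M N) :
    AddSubgroup.closure {x : N | ∃ (lam : N) (w : N ≃ₗ[ℤ] N),
        w ∈ Subgroup.closure (Set.range fun i : ι => P.coreflection i) ∧ x = lam - w lam} =
      AddSubgroup.closure {x : N | ∃ (i : ι) (lam : N),
        x = P.toLinearMap (P.root i) lam • P.coroot i} := by
  -- the statement's `•` is `zsmul`, not the scalar action of the `Module ℤ N` binder
  have hcoreflection (i : ι) (f : N) :
      f - P.coreflection i f = P.toLinearMap (P.root i) f • P.coroot i :=
    (P.sub_coreflection_apply i f).trans (int_smul_eq_zsmul _ _ _)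
  refine le_antisymm (AddSubgroup.closure_le _ |>.mpr ?_) (AddSubgroup.closure_le _ |>.mpr ?_)
  · rintro _ ⟨lam, w, hw, rfl⟩
    refine Subgroup.sub_smul_mem_of_mem_closure ?_ hw lam
    rintro _ ⟨i, rfl⟩ f
    exact AddSubgroup.subset_closure ⟨i, f, hcoreflection i f⟩
  · rintro _ ⟨i, lam, rfl⟩
    exact AddSubgroup.subset_closure
      ⟨lam, _, Subgroup.subset_closure ⟨i, rfl⟩, (hcoreflection i lam).symm⟩

/-- For a root pairing over `ℤ` between free `ℤ`-modules, with the Weyl group `W` acting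
on the coweight lattice `N` by the coreflections, the subgroup of `N` generated by
`{λ − w·λ : λ ∈ N, w ∈ W}` equals the subgroup generated by
`{⟨α, λ⟩·α∨ : α a root, λ ∈ N}`. -/
theorem stmt_12 {ι M N : Type*} [AddCommGroup M] [Module ℤ M] [AddCommGroup N] [Module ℤ N]
    [Module.Free ℤ M] [Module.Free ℤ N] (P : RootPairing ι ℤ M N) :
    AddSubgroup.closure {x : N | ∃ (lam : N) (w : N ≃ₗ[ℤ] N),
        w ∈ Subgroup.closure (Set.range fun i : ι => P.coreflection i) ∧ x = lam - w lam} =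
      AddSubgroup.closure {x : N | ∃ (i : ι) (lam : N),
        x = P.toLinearMap (P.root i) lam • P.coroot i} :=
  stmt_12_general P
end

section
/- Let V be an additive abelian group, Δ ⊆ V a finite subset with Δ = −Δ, and Δ_L ⊆ Δ a subset with Δ_L = −Δ_L, equipped with a partition Δ_L = Δ_L⁺ ⊔ Δ_L⁻ where Δ_L⁻ = −Δ_L⁺. Assume: (h1) if α, β ∈ Δ_L and α + β ∈ Δ, then α + β ∈ Δ_L; (h2) if α, β ∈ Δ_L⁺ and α + β ∈ Δ, then α + β ∈ Δ_L⁺. Let g: Δ∖Δ_L → ℤ satisfy: (a′) g(α) + g(β) ≥ g(α+β) whenever α, β, α+β ∈ Δ∖Δ_L; (b′) g(α) + g(−α) ≥ 1 for all α ∈ Δ∖Δ_L; (c′) g(α+β) = g(β) whenever α ∈ Δ_L, β ∈ Δ∖Δ_L, and α+β ∈ Δ. Define f: Δ → ℤ by f = g on Δ∖Δ_L, f = 0 on Δ_L⁺, and f = 1 on Δ_L⁻. Then f satisfies: (a) f(α) + f(β) ≥ f(α+β) whenever α, β, α+β ∈ Δ; and (b) f(α) + f(−α) ≥ 1 for all α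 ∈ Δ. -/
/-!
On the Levi part `f` is the indicator of `Δ_L⁻`, which is concave because `Δ_L⁺` is closed
under addition and `Δ_L⁻ = −Δ_L⁺`. Off the Levi part `f = g`. For mixed pairs, closure of
`Δ_L` under addition forces `α + β ∉ Δ_L`, and (c′) gives `f (α + β) = f β ≤ f α + f β`.
The only genuinely new case is `α, β ∉ Δ_L` with `α + β ∈ Δ_L`: then (c′) applied to
`(α + β) + (-β)` gives `g α = g (-β)`, so (b′) yields `f α + f β ≥ 1 ≥ f (α + β)`.
-/

theorem eq_zero_or_eq_one_of_mem_levi {V : Type*} {L Lp : Set V} {f : V → ℤ} {α : V}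
    (hfp : ∀ α ∈ Lp, f α = 0) (hfm : ∀ α ∈ L \ Lp, f α = 1) (hα : α ∈ L) :
    f α = 0 ∨ f α = 1 := by
  by_cases hαp : α ∈ Lp
  · exact .inl (hfp α hαp)
  · exact .inr (hfm α ⟨hα, hαp⟩)

section Gluing

variable {V : Type*} [AddCommGroup V] {Δ L Lp : Set V} {f g : V → ℤ} {α β : V}

theorem add_mem_sdiff_of_mem_of_mem_sdiff (hLsymm : ∀ α ∈ L, -α ∈ L)
    (h1 : ∀ α ∈ L, ∀ β ∈ L, α + β ∈ Δ → α + β ∈ L)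
    (hα : α ∈ L) (hβ : β ∈ Δ \ L) (hαβ : α + β ∈ Δ) : α + β ∈ Δ \ L := by
  refine ⟨hαβ, fun hαβL => hβ.2 ?_⟩
  simpa using h1 (-α) (hLsymm α hα) (α + β) hαβL (by simpa using hβ.1)

theorem neg_mem_sdiff (hΔsymm : ∀ α ∈ Δ, -α ∈ Δ) (hLsymm : ∀ α ∈ L, -α ∈ L)
    (hα : α ∈ Δ \ L) : -α ∈ Δ \ L :=
  ⟨hΔsymm α hα.1, fun h => hα.2 (by simpa using hLsymm (-α) h)⟩

theorem le_add_of_mem_levi (h2 : ∀ α ∈ Lp, ∀ β ∈ Lp, α + β ∈ Δ → α + β ∈ Lp)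
    (hfp : ∀ α ∈ Lp, f α = 0) (hfm : ∀ α ∈ L \ Lp, f α = 1)
    (hα : α ∈ L) (hβ : β ∈ L) (hαβ : α + β ∈ L) (hαβΔ : α + β ∈ Δ) :
    f (α + β) ≤ f α + f β := by
  have hα01 := eq_zero_or_eq_one_of_mem_levi hfp hfm hα
  have hβ01 := eq_zero_or_eq_one_of_mem_levi hfp hfm hβ
  have hαβ01 := eq_zero_or_eq_one_of_mem_levi hfp hfm hαβ
  by_cases hαp : α ∈ Lp
  · by_cases hβp : β ∈ Lp
    · rw [hfp _ hαp, hfp _ hβp, hfp _ (h2 α hαp β hβp hαβΔ), add_zero]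
    · rw [hfm β ⟨hβ, hβp⟩]; omega
  · rw [hfm α ⟨hα, hαp⟩]; omega

theorem le_add_of_mem_levi_of_mem_sdiff (hLsymm : ∀ α ∈ L, -α ∈ L)
    (h1 : ∀ α ∈ L, ∀ β ∈ L, α + β ∈ Δ → α + β ∈ L)
    (hc' : ∀ α ∈ L, ∀ β ∈ Δ \ L, α + β ∈ Δ → g (α + β) = g β)
    (hfg : ∀ α ∈ Δ \ L, f α = g α) (hfα : 0 ≤ f α)
    (hα : α ∈ L) (hβ : β ∈ Δ \ L) (hαβ : α + β ∈ Δ) : f (α + β) ≤ f α + f β := by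
  rw [hfg _ (add_mem_sdiff_of_mem_of_mem_sdiff hLsymm h1 hα hβ hαβ), hfg _ hβ, hc' α hα β hβ hαβ]
  omega

theorem le_add_of_add_mem_levi (hΔsymm : ∀ α ∈ Δ, -α ∈ Δ) (hLsymm : ∀ α ∈ L, -α ∈ L)
    (hb' : ∀ α ∈ Δ \ L, g α + g (-α) ≥ 1)
    (hc' : ∀ α ∈ L, ∀ β ∈ Δ \ L, α + β ∈ Δ → g (α + β) = g β)
    (hfg : ∀ α ∈ Δ \ L, f α = g α) (hfαβ : f (α + β) ≤ 1)
    (hα : α ∈ Δ \ L) (hβ : β ∈ Δ \ L) (hαβ : α + β ∈ L) : f (α + β) ≤ f α + f β := by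
  have hnβ := neg_mem_sdiff hΔsymm hLsymm hβ
  have hgα : g α = g (-β) := by
    simpa using hc' (α + β) hαβ (-β) hnβ (by simpa using hα.1)
  have := hb' (-β) hnβ
  rw [neg_neg] at this
  rw [hfg _ hα, hfg _ hβ]
  omega

theorem glued_add_le (hΔsymm : ∀ α ∈ Δ, -α ∈ Δ) (hLsymm : ∀ α ∈ L, -α ∈ L)
    (h1 : ∀ α ∈ L, ∀ β ∈ L, α + β ∈ Δ → α + β ∈ L)
    (h2 : ∀ α ∈ Lp, ∀ β ∈ Lp, α + β ∈ Δ → α + β ∈ Lp)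
    (ha' : ∀ α ∈ Δ \ L, ∀ β ∈ Δ \ L, α + β ∈ Δ \ L → g α + g β ≥ g (α + β))
    (hb' : ∀ α ∈ Δ \ L, g α + g (-α) ≥ 1)
    (hc' : ∀ α ∈ L, ∀ β ∈ Δ \ L, α + β ∈ Δ → g (α + β) = g β)
    (hfg : ∀ α ∈ Δ \ L, f α = g α) (hfp : ∀ α ∈ Lp, f α = 0) (hfm : ∀ α ∈ L \ Lp, f α = 1)
    (hα : α ∈ Δ) (hβ : β ∈ Δ) (hαβ : α + β ∈ Δ) : f (α + β) ≤ f α + f β := by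
  have hf0 {γ : V} (hγ : γ ∈ L) : 0 ≤ f γ := by
    rcases eq_zero_or_eq_one_of_mem_levi hfp hfm hγ with h | h <;> omega
  have hf1 {γ : V} (hγ : γ ∈ L) : f γ ≤ 1 := by
    rcases eq_zero_or_eq_one_of_mem_levi hfp hfm hγ with h | h <;> omega
  by_cases hαL : α ∈ L <;> by_cases hβL : β ∈ L
  · exact le_add_of_mem_levi h2 hfp hfm hαL hβL (h1 α hαL β hβL hαβ) hαβ
  · exact le_add_of_mem_levi_of_mem_sdiff hLsymm h1 hc' hfg (hf0 hαL) hαL ⟨hβ, hβL⟩ hαβ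
  · rw [add_comm α β, add_comm (f α)]
    exact le_add_of_mem_levi_of_mem_sdiff hLsymm h1 hc' hfg (hf0 hβL) hβL ⟨hα, hαL⟩
      (add_comm α β ▸ hαβ)
  · by_cases hαβL : α + β ∈ L
    · exact le_add_of_add_mem_levi hΔsymm hLsymm hb' hc' hfg (hf1 hαβL) ⟨hα, hαL⟩ ⟨hβ, hβL⟩ hαβL
    · rw [hfg _ ⟨hα, hαL⟩, hfg _ ⟨hβ, hβL⟩, hfg _ ⟨hαβ, hαβL⟩]
      exact ha' α ⟨hα, hαL⟩ β ⟨hβ, hβL⟩ ⟨hαβ, hαβL⟩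

theorem one_le_glued_add_neg (hΔsymm : ∀ α ∈ Δ, -α ∈ Δ) (hLsymm : ∀ α ∈ L, -α ∈ L)
    (hpart : L = Lp ∪ {α | -α ∈ Lp}) (hdisj : Lp ∩ {α | -α ∈ Lp} = ∅)
    (hb' : ∀ α ∈ Δ \ L, g α + g (-α) ≥ 1)
    (hfg : ∀ α ∈ Δ \ L, f α = g α) (hfp : ∀ α ∈ Lp, f α = 0) (hfm : ∀ α ∈ L \ Lp, f α = 1)
    (hα : α ∈ Δ) : 1 ≤ f α + f (-α) := by
  by_cases hαL : α ∈ L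
  · have hnα := hLsymm α hαL
    by_cases hαp : α ∈ Lp
    · have hnαp : -α ∉ Lp := fun h => (Set.eq_empty_iff_forall_notMem.mp hdisj) α ⟨hαp, h⟩
      rw [hfp _ hαp, hfm _ ⟨hnα, hnαp⟩]
      omega
    · have hnαp : -α ∈ Lp := ((hpart ▸ hαL : α ∈ Lp ∪ {α | -α ∈ Lp})).resolve_left hαp
      rw [hfm _ ⟨hαL, hαp⟩, hfp _ hnαp]
      omega
  · rw [hfg _ ⟨hα, hαL⟩, hfg _ (neg_mem_sdiff hΔsymm hLsymm ⟨hα, hαL⟩)]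
    exact hb' α ⟨hα, hαL⟩

end Gluing

theorem stmt_15_general {V : Type*} [AddCommGroup V]
    (Δ ΔL ΔLp : Set V)
    (hΔsymm : ∀ α ∈ Δ, -α ∈ Δ)
    (hLsymm : ∀ α ∈ ΔL, -α ∈ ΔL)
    (hpart : ΔL = ΔLp ∪ {α | -α ∈ ΔLp})
    (hdisj : ΔLp ∩ {α | -α ∈ ΔLp} = ∅)
    (h1 : ∀ α ∈ ΔL, ∀ β ∈ ΔL, α + β ∈ Δ → α + β ∈ ΔL)
    (h2 : ∀ α ∈ ΔLp, ∀ β ∈ ΔLp, α + β ∈ Δ → α + β ∈ ΔLp)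
    (g : V → ℤ)
    (ha' : ∀ α ∈ Δ \ ΔL, ∀ β ∈ Δ \ ΔL, α + β ∈ Δ \ ΔL → g α + g β ≥ g (α + β))
    (hb' : ∀ α ∈ Δ \ ΔL, g α + g (-α) ≥ 1)
    (hc' : ∀ α ∈ ΔL, ∀ β ∈ Δ \ ΔL, α + β ∈ Δ → g (α + β) = g β)
    (f : V → ℤ)
    (hfg : ∀ α ∈ Δ \ ΔL, f α = g α)
    (hfp : ∀ α ∈ ΔLp, f α = 0)
    (hfm : ∀ α ∈ ΔL \ ΔLp, f α = 1) :
    (∀ α ∈ Δ, ∀ β ∈ Δ, α + β ∈ Δ → f α + f β ≥ f (α + β)) ∧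
    (∀ α ∈ Δ, f α + f (-α) ≥ 1) :=
  ⟨fun _ hα _ hβ hαβ => glued_add_le hΔsymm hLsymm h1 h2 ha' hb' hc' hfg hfp hfm hα hβ hαβ,
    fun _ hα => one_le_glued_add_neg hΔsymm hLsymm hpart hdisj hb' hfg hfp hfm hα⟩

/-- Gluing a concave function: let `Δ` be a finite symmetric subset of an abelian group,
`Δ_L ⊆ Δ` symmetric and closed under addition within `Δ`, partitioned as
`Δ_L = Δ_L⁺ ⊔ (−Δ_L⁺)` with `Δ_L⁺` closed under addition within `Δ`.  If
`g : Δ∖Δ_L → ℤ` satisfies the concavity conditions (a′), (b′) and the Levi-compatibility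
condition (c′), then the function `f` equal to `g` on `Δ∖Δ_L`, to `0` on `Δ_L⁺` and to
`1` on `Δ_L⁻` satisfies the concavity conditions (a) and (b) on all of `Δ`. -/
theorem stmt_15 {V : Type*} [AddCommGroup V]
    (Δ ΔL ΔLp : Set V) (hfin : Δ.Finite)
    (hΔsymm : ∀ α ∈ Δ, -α ∈ Δ)
    (hLsub : ΔL ⊆ Δ) (hLsymm : ∀ α ∈ ΔL, -α ∈ ΔL)
    (hLpsub : ΔLp ⊆ ΔL)
    (hpart : ΔL = ΔLp ∪ {α | -α ∈ ΔLp})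
    (hdisj : ΔLp ∩ {α | -α ∈ ΔLp} = ∅)
    (h1 : ∀ α ∈ ΔL, ∀ β ∈ ΔL, α + β ∈ Δ → α + β ∈ ΔL)
    (h2 : ∀ α ∈ ΔLp, ∀ β ∈ ΔLp, α + β ∈ Δ → α + β ∈ ΔLp)
    (g : V → ℤ)
    (ha' : ∀ α ∈ Δ \ ΔL, ∀ β ∈ Δ \ ΔL, α + β ∈ Δ \ ΔL → g α + g β ≥ g (α + β))
    (hb' : ∀ α ∈ Δ \ ΔL, g α + g (-α) ≥ 1)
    (hc' : ∀ α ∈ ΔL, ∀ β ∈ Δ \ ΔL, α + β ∈ Δ → g (α + β) = g β)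
    (f : V → ℤ)
    (hfg : ∀ α ∈ Δ \ ΔL, f α = g α)
    (hfp : ∀ α ∈ ΔLp, f α = 0)
    (hfm : ∀ α ∈ ΔL \ ΔLp, f α = 1) :
    (∀ α ∈ Δ, ∀ β ∈ Δ, α + β ∈ Δ → f α + f β ≥ f (α + β)) ∧
    (∀ α ∈ Δ, f α + f (-α) ≥ 1) :=
  stmt_15_general Δ ΔL ΔLp hΔsymm hLsymm hpart hdisj h1 h2 g ha' hb' hc' f hfg hfp hfm
end

section
/- Let G be a group and let J⁺, J⁰, J⁻ be subgroups of G such that the product set J := J⁺·J⁰·J⁻ = {abc : a ∈ J⁺, b ∈ J⁰, c ∈ J⁻} is a subgroup of G. Let M be a subgroup of G containing J⁰ such that M normalizes both J⁺ and J⁻ (i.e., mJ⁺m⁻¹ = J⁺ and mJ⁻m⁻¹ = J⁻ for all m ∈ M). Then the product set K := J⁺·M·J⁻ is a subgroup of G, and K equals the product set J·M. -/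
open scoped Pointwise

/-!
Since `M` normalizes `J⁺` and `J⁻` and absorbs `J⁰`, both `J·M` and `M·J` equal `J⁺·M·J⁻`.
The product set of two subgroups that commute as sets is closed under products and inverses,
so it is a subgroup.
-/

namespace Subgroup

variable {G : Type*} [Group G]

theorem coe_mul_coe_of_le {H K : Subgroup G} (hHK : H ≤ K) : (H : Set G) * K = K :=
  (Set.mul_subset_mul_right hHK).trans_eq (coe_mul_coe K) |>.antisymm
    (Set.subset_mul_right _ H.one_mem)

theorem coe_mul_coe_of_ge {H K : Subgroup G} (hKH : K ≤ H) : (H : Set G) * K = H :=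
  (Set.mul_subset_mul_left hKH).trans_eq (coe_mul_coe H) |>.antisymm
    (Set.subset_mul_left _ K.one_mem)

theorem exists_coe_eq_mul_of_mul_comm {H K : Subgroup G}
    (hHK : (H : Set G) * K = K * H) : ∃ L : Subgroup G, (L : Set G) = H * K := by
  have mul_self : (H : Set G) * K * (H * K) = H * K := by
    rw [mul_assoc, ← mul_assoc (K : Set G), ← hHK, mul_assoc, coe_mul_coe, ← mul_assoc,
      coe_mul_coe]
  have inv_self : ((H : Set G) * K)⁻¹ = H * K := by
    rw [mul_inv_rev, inv_coe_set, inv_coe_set, hHK]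
  exact ⟨{ carrier := H * K
           one_mem' := ⟨1, H.one_mem, 1, K.one_mem, mul_one 1⟩
           mul_mem' := fun ha hb => mul_self ▸ Set.mul_mem_mul ha hb
           inv_mem' := fun ha => inv_self ▸ Set.inv_mem_inv.2 ha }, rfl⟩

theorem coe_mul_comm_of_forall_conj_mem_iff {M H : Subgroup G}
    (hN : ∀ m ∈ M, ∀ g : G, m * g * m⁻¹ ∈ H ↔ g ∈ H) : (M : Set G) * H = H * M :=
  set_mul_normalizer_comm _ H fun m hm => mem_normalizer_iff.2 fun g => (hN m hm g).symm

end Subgroup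

open Subgroup in
/-- Let `J⁺, J⁰, J⁻` be subgroups of `G` such that the product set `J = J⁺·J⁰·J⁻` is a
subgroup, and let `M ⊇ J⁰` be a subgroup normalizing `J⁺` and `J⁻`.  Then the product set
`K = J⁺·M·J⁻` is a subgroup of `G`, and it equals the product set `J·M`. -/
theorem stmt_16 {G : Type*} [Group G] (Jp J0 Jm M : Subgroup G)
    (hJ : ∃ J : Subgroup G, (J : Set G) = (Jp : Set G) * (J0 : Set G) * (Jm : Set G))
    (hJ0M : J0 ≤ M)
    (hNp : ∀ m ∈ M, ∀ g : G, m * g * m⁻¹ ∈ Jp ↔ g ∈ Jp)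
    (hNm : ∀ m ∈ M, ∀ g : G, m * g * m⁻¹ ∈ Jm ↔ g ∈ Jm) :
    (∃ K : Subgroup G, (K : Set G) = (Jp : Set G) * (M : Set G) * (Jm : Set G)) ∧
    (Jp : Set G) * (M : Set G) * (Jm : Set G) =
      ((Jp : Set G) * (J0 : Set G) * (Jm : Set G)) * (M : Set G) := by
  obtain ⟨J, hJ⟩ := hJ
  have hp := coe_mul_comm_of_forall_conj_mem_iff hNp
  have hm := coe_mul_comm_of_forall_conj_mem_iff hNm
  have hJM : (J : Set G) * M = Jp * M * Jm := by
    rw [hJ, mul_assoc _ (Jm : Set G), ← hm, ← mul_assoc, mul_assoc _ (J0 : Set G),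
      coe_mul_coe_of_le hJ0M]
  have hMJ : (M : Set G) * J = Jp * M * Jm := by
    rw [hJ, ← mul_assoc, ← mul_assoc, hp, mul_assoc _ (M : Set G), coe_mul_coe_of_ge hJ0M]
  obtain ⟨K, hK⟩ := exists_coe_eq_mul_of_mul_comm (hJM.trans hMJ.symm)
  exact ⟨⟨K, hK.trans hJM⟩, hJ ▸ hJM.symm⟩
end
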